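/- Let A be a finite-dimensional k-algebra, Q a finitely generated left A-module, Λ = End_A(Q)^op, and M a finitely generated left A-module. Then the evaluation map M → Hom_Λ(Hom_A(M, Q), Q) is an isomorphism if and only if Q-domdim_A(M) ≥ 2, i.e., there exists an exact sequence 0 → M → Q_1 → Q_2 with Q_1, Q_2 ∈ add(Q) that remains exact under Hom_A(−, Q). -/

import Mathlib

universe u
open MulOpposite

noncomputable section
namespace Paper

section RingDefs
variable (B : Type u) [Ring B]

/-- `X` belongs to `add Q`: it is a direct summand of a finite direct sum of copies of `Q`. -/
def InAdd (Q X : ModuleCat.{u} B) : Prop :=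
  ∃ (n : ℕ) (s : X →ₗ[B] (Fin n → Q)) (r : (Fin n → Q) →ₗ[B] X), r ∘ₗ s = LinearMap.id

/-- A superfluous (small) submodule. -/
def Superfluous {P : ModuleCat.{u} B} (N : Submodule B P) : Prop :=
  ∀ K : Submodule B P, K ⊔ N = ⊤ → K = ⊤

/-- An essential (large) submodule. -/
def Essential {P : ModuleCat.{u} B} (N : Submodule B P) : Prop :=
  ∀ K : Submodule B P, K ⊓ N = ⊥ → K = ⊥

/-- `p : P → X` is a projective cover. -/
def IsProjCover {P X : ModuleCat.{u} B} (p : P →ₗ[B] X) : Prop :=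
  Module.Projective B P ∧ Function.Surjective p ∧ Superfluous B (LinearMap.ker p)

/-- `ι : X → I` is an injective envelope. -/
def IsInjEnvelope {X I : ModuleCat.{u} B} (ι : X →ₗ[B] I) : Prop :=
  Module.Injective B I ∧ Function.Injective ι ∧ Essential B (LinearMap.range ι)

/-- The zero module. -/
def zeroMod : ModuleCat.{u} B := ModuleCat.of B PUnit

/-- An exact sequence `0 → P_m → ⋯ → P_1 → P_0 → X → 0` whose terms satisfy the
predicate `T` and which remains exact under `Hom(test, −)`. -/
def ResLE (test : ModuleCat.{u} B) (T : ModuleCat.{u} B → Prop)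
    (X : ModuleCat.{u} B) (m : ℕ) : Prop :=
  ∃ (P : ℕ → ModuleCat.{u} B) (d : ∀ j, P (j+1) →ₗ[B] P j) (aug : P 0 →ₗ[B] X),
    (∀ j, j ≤ m → T (P j)) ∧ (∀ j, m < j → Subsingleton (P j)) ∧
    Function.Surjective aug ∧ Function.Exact (d 0) aug ∧
    (∀ j, Function.Exact (d (j+1)) (d j)) ∧
    (∀ f : test →ₗ[B] X, ∃ h : test →ₗ[B] P 0, aug ∘ₗ h = f) ∧
    (∀ f : test →ₗ[B] P 0, aug ∘ₗ f = 0 → ∃ h : test →ₗ[B] P 1, d 0 ∘ₗ h = f) ∧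
    (∀ j, ∀ f : test →ₗ[B] P (j+1), d j ∘ₗ f = 0 →
      ∃ h : test →ₗ[B] P (j+2), d (j+1) ∘ₗ h = f)

/-- An exact sequence `0 → X → I_0 → ⋯ → I_m → 0` whose terms satisfy the predicate `T`
and which remains exact under `Hom(−, test)`. -/
def CoresLE (test : ModuleCat.{u} B) (T : ModuleCat.{u} B → Prop)
    (X : ModuleCat.{u} B) (m : ℕ) : Prop :=
  ∃ (M : ℕ → ModuleCat.{u} B) (ι : X →ₗ[B] M 0) (d : ∀ j, M j →ₗ[B] M (j+1)),
    (∀ j, j ≤ m → T (M j)) ∧ (∀ j, m < j → Subsingleton (M j)) ∧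
    Function.Injective ι ∧ Function.Exact ι (d 0) ∧
    (∀ j, Function.Exact (d j) (d (j+1))) ∧
    (∀ f : X →ₗ[B] test, ∃ h : M 0 →ₗ[B] test, h ∘ₗ ι = f) ∧
    (∀ f : M 0 →ₗ[B] test, f ∘ₗ ι = 0 → ∃ h : M 1 →ₗ[B] test, h ∘ₗ d 0 = f) ∧
    (∀ j, ∀ f : M (j+1) →ₗ[B] test, f ∘ₗ d j = 0 →
      ∃ h : M (j+2) →ₗ[B] test, h ∘ₗ d (j+1) = f)

/-- Projective dimension at most `n`. -/
def pdLE (X : ModuleCat.{u} B) (n : ℕ) : Prop :=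
  ResLE B (zeroMod B) (fun P => Module.Projective B P) X n

/-- Injective dimension at most `n`. -/
def idLE (X : ModuleCat.{u} B) (n : ℕ) : Prop :=
  CoresLE B (zeroMod B) (fun I => Module.Injective B I) X n

/-- Projective dimension equal to `n`. -/
def pdEq (X : ModuleCat.{u} B) (n : ℕ) : Prop :=
  pdLE B X n ∧ ∀ j, pdLE B X j → n ≤ j

/-- Injective dimension equal to `n`. -/
def idEq (X : ModuleCat.{u} B) (n : ℕ) : Prop :=
  idLE B X n ∧ ∀ j, idLE B X j → n ≤ j

/-- Projective dimension as an element of `ℕ∞`. -/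
def pdDim (X : ModuleCat.{u} B) : ℕ∞ :=
  sInf {c : ℕ∞ | ∃ n : ℕ, c = n ∧ pdLE B X n}

/-- Injective dimension as an element of `ℕ∞`. -/
def idDim (X : ModuleCat.{u} B) : ℕ∞ :=
  sInf {c : ℕ∞ | ∃ n : ℕ, c = n ∧ idLE B X n}

/-- Relative dominant dimension of `X` with respect to `Q` is at least `n`:
there is an exact sequence `0 → X → Q_1 → ⋯ → Q_n` with `Q_i ∈ add Q`
remaining exact under `Hom(−, Q)`. -/
def domdimGE (Q X : ModuleCat.{u} B) (n : ℕ) : Prop :=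
  n = 0 ∨ ∃ (M : ℕ → ModuleCat.{u} B) (ι : X →ₗ[B] M 0) (d : ∀ j, M j →ₗ[B] M (j+1)),
    (∀ j, j + 1 ≤ n → InAdd B Q (M j)) ∧
    Function.Injective ι ∧ (2 ≤ n → Function.Exact ι (d 0)) ∧
    (∀ j, j + 3 ≤ n → Function.Exact (d j) (d (j+1))) ∧
    (∀ f : X →ₗ[B] Q, ∃ h : M 0 →ₗ[B] Q, h ∘ₗ ι = f) ∧
    (2 ≤ n → ∀ f : M 0 →ₗ[B] Q, f ∘ₗ ι = 0 → ∃ h : M 1 →ₗ[B] Q, h ∘ₗ d 0 = f) ∧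
    (∀ j, j + 3 ≤ n → ∀ f : M (j+1) →ₗ[B] Q, f ∘ₗ d j = 0 →
      ∃ h : M (j+2) →ₗ[B] Q, h ∘ₗ d (j+1) = f)

/-- Relative codominant dimension of `X` with respect to `Q` is at least `n`. -/
def codomdimGE (Q X : ModuleCat.{u} B) (n : ℕ) : Prop :=
  n = 0 ∨ ∃ (M : ℕ → ModuleCat.{u} B) (aug : M 0 →ₗ[B] X) (d : ∀ j, M (j+1) →ₗ[B] M j),
    (∀ j, j + 1 ≤ n → InAdd B Q (M j)) ∧
    Function.Surjective aug ∧ (2 ≤ n → Function.Exact (d 0) aug) ∧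
    (∀ j, j + 3 ≤ n → Function.Exact (d (j+1)) (d j)) ∧
    (∀ f : Q →ₗ[B] X, ∃ h : Q →ₗ[B] M 0, aug ∘ₗ h = f) ∧
    (2 ≤ n → ∀ f : Q →ₗ[B] M 0, aug ∘ₗ f = 0 → ∃ h : Q →ₗ[B] M 1, d 0 ∘ₗ h = f) ∧
    (∀ j, j + 3 ≤ n → ∀ f : Q →ₗ[B] M (j+1), d j ∘ₗ f = 0 →
      ∃ h : Q →ₗ[B] M (j+2), d (j+1) ∘ₗ h = f)

/-- Relative dominant dimension with respect to `Q`, as an element of `ℕ∞`. -/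
def relDomDim (Q X : ModuleCat.{u} B) : ℕ∞ :=
  sSup {c : ℕ∞ | ∃ n : ℕ, c = n ∧ domdimGE B Q X n}

/-- Relative codominant dimension with respect to `Q`, as an element of `ℕ∞`. -/
def relCodomDim (Q X : ModuleCat.{u} B) : ℕ∞ :=
  sSup {c : ℕ∞ | ∃ n : ℕ, c = n ∧ codomdimGE B Q X n}

/-- A projective resolution. -/
structure ProjRes (X : ModuleCat.{u} B) where
  P : ℕ → ModuleCat.{u} B
  d : ∀ j, P (j+1) →ₗ[B] P j
  aug : P 0 →ₗ[B] X
  proj : ∀ j, Module.Projective B (P j)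
  augSurj : Function.Surjective aug
  exact0 : Function.Exact (d 0) aug
  exact : ∀ j, Function.Exact (d (j+1)) (d j)

/-- Vanishing of `Ext^i(X, Y)`, expressed via projective resolutions. -/
def ExtVanish (X Y : ModuleCat.{u} B) : ℕ → Prop
  | 0 => Subsingleton (X →ₗ[B] Y)
  | (i+1) => ∀ R : ProjRes B X, ∀ f : R.P (i+1) →ₗ[B] Y,
      f ∘ₗ R.d (i+1) = 0 → ∃ g : R.P i →ₗ[B] Y, f = g ∘ₗ R.d i

/-- `Q` is self-orthogonal: `Ext^i(Q, Q) = 0` for all `i > 0`. -/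
def SelfOrth (Q : ModuleCat.{u} B) : Prop := ∀ i, 1 ≤ i → ExtVanish B Q Q i

/-- `Z` is a (first, minimal) syzygy of `X`. -/
def IsSyzygyOf (X Z : ModuleCat.{u} B) : Prop :=
  ∃ (P : ModuleCat.{u} B) (p : P →ₗ[B] X), IsProjCover B p ∧
    Nonempty (Z ≃ₗ[B] LinearMap.ker p)

/-- `Z` is an `n`-th syzygy `Ω^n X`. -/
def IsOmegaOf : ℕ → ModuleCat.{u} B → ModuleCat.{u} B → Prop
  | 0, X, Z => Nonempty (Z ≃ₗ[B] X)
  | (n+1), X, Z => ∃ Y, IsSyzygyOf B X Y ∧ IsOmegaOf n Y Z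

/-- `Z` is a (first, minimal) cosyzygy of `X`. -/
def IsCosyzygyOf (X Z : ModuleCat.{u} B) : Prop :=
  ∃ (I : ModuleCat.{u} B) (ι : X →ₗ[B] I), IsInjEnvelope B ι ∧
    Nonempty (Z ≃ₗ[B] (I ⧸ LinearMap.range ι))

/-- `Z` is an `n`-th cosyzygy `Ω^{-n} X`. -/
def IsOmegaInvOf : ℕ → ModuleCat.{u} B → ModuleCat.{u} B → Prop
  | 0, X, Z => Nonempty (Z ≃ₗ[B] X)
  | (n+1), X, Z => ∃ Y, IsCosyzygyOf B X Y ∧ IsOmegaInvOf n Y Z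

/-- Precomposition with `g`, as a map of right `B`-modules `Hom(P₀,B) → Hom(P₁,B)`. -/
def lprecomp {P1 P0 : ModuleCat.{u} B} (g : P1 →ₗ[B] P0) :
    (P0 →ₗ[B] B) →ₗ[Bᵐᵒᵖ] (P1 →ₗ[B] B) where
  toFun h := h ∘ₗ g
  map_add' _ _ := rfl
  map_smul' _ _ := rfl

/-- `T` is a transpose `Tr X` (computed from a minimal projective presentation). -/
def IsTransposeOf (X : ModuleCat.{u} B) (T : ModuleCat.{u} Bᵐᵒᵖ) : Prop :=
  ∃ (P1 P0 : ModuleCat.{u} B) (g : P1 →ₗ[B] P0) (p : P0 →ₗ[B] X),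
    IsProjCover B p ∧ Module.Projective B P1 ∧ Function.Exact g p ∧
    Superfluous B (LinearMap.ker g) ∧
    Nonempty (T ≃ₗ[Bᵐᵒᵖ] ((P1 →ₗ[B] B) ⧸ LinearMap.range (lprecomp B g)))

/-- The canonical ring homomorphism `B →+* Bᵐᵒᵖᵐᵒᵖ`. -/
def opOpHom : B →+* Bᵐᵒᵖᵐᵒᵖ where
  toFun b := op (op b)
  map_one' := rfl
  map_mul' _ _ := rfl
  map_zero' := rfl
  map_add' _ _ := rfl


/-- An `F_Mo`-projective resolution: terms in `add(B ⊕ Mo)`, exact, and remaining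
exact under `Hom(Mo, −)`. -/
structure FProjRes (Mo X : ModuleCat.{u} B) where
  P : ℕ → ModuleCat.{u} B
  d : ∀ j, P (j+1) →ₗ[B] P j
  aug : P 0 →ₗ[B] X
  mem : ∀ j, InAdd B (ModuleCat.of B (B × Mo)) (P j)
  augSurj : Function.Surjective aug
  exact0 : Function.Exact (d 0) aug
  exact : ∀ j, Function.Exact (d (j+1)) (d j)
  lift0 : ∀ f : Mo →ₗ[B] X, ∃ h : Mo →ₗ[B] P 0, aug ∘ₗ h = f
  lift1 : ∀ f : Mo →ₗ[B] P 0, aug ∘ₗ f = 0 → ∃ h : Mo →ₗ[B] P 1, d 0 ∘ₗ h = f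
  lift : ∀ j, ∀ f : Mo →ₗ[B] P (j+1), d j ∘ₗ f = 0 →
    ∃ h : Mo →ₗ[B] P (j+2), d (j+1) ∘ₗ h = f

/-- Vanishing of the relative extension group `Ext^i_{F_Mo}(X, Y)`, computed via
`F_Mo`-projective resolutions. -/
def FExtVanish (Mo X Y : ModuleCat.{u} B) : ℕ → Prop
  | 0 => True
  | (i+1) => ∀ R : FProjRes B Mo X, ∀ f : R.P (i+1) →ₗ[B] Y,
      f ∘ₗ R.d (i+1) = 0 → ∃ g : R.P i →ₗ[B] Y, f = g ∘ₗ R.d i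

end RingDefs

section Duality
variable (k : Type u) [Field k] (B : Type u) [Ring B] [Algebra k B]

noncomputable instance kmod (X : ModuleCat.{u} B) : Module k X :=
  Module.compHom X (algebraMap k B)

instance kmodSMulComm (X : ModuleCat.{u} B) : SMulCommClass B k X :=
  ⟨fun b c x => by
    show b • ((algebraMap k B c) • x) = (algebraMap k B c) • (b • x)
    rw [← mul_smul, ← mul_smul, Algebra.commutes]⟩

instance kmodTower (X : ModuleCat.{u} B) : IsScalarTower k B X :=
  ⟨fun c b x => by
    show (c • b) • x = (algebraMap k B c) • (b • x)
    rw [Algebra.smul_def, mul_smul]⟩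

noncomputable instance dualModL (X : ModuleCat.{u} B) : Module Bᵐᵒᵖ (X →ₗ[k] k) where
  smul b φ := φ ∘ₗ (DistribMulAction.toLinearMap k X b.unop)
  one_smul φ := by
    ext x
    show φ ((1 : Bᵐᵒᵖ).unop • x) = φ x
    rw [unop_one, one_smul]
  mul_smul b c φ := by
    ext x
    show φ ((b * c).unop • x) = φ (c.unop • b.unop • x)
    rw [unop_mul, mul_smul]
  smul_zero b := rfl
  smul_add b φ ψ := rfl
  add_smul b c φ := by
    ext x
    show φ ((b + c).unop • x) = φ (b.unop • x) + φ (c.unop • x)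
    rw [unop_add, add_smul, map_add]
  zero_smul φ := by
    ext x
    show φ ((0 : Bᵐᵒᵖ).unop • x) = 0
    rw [unop_zero, zero_smul, map_zero]

/-- The standard duality `D = Hom_k(−, k)`, sending a left `B`-module to a right
`B`-module. -/
def Dop (X : ModuleCat.{u} B) : ModuleCat.{u} Bᵐᵒᵖ :=
  ModuleCat.of Bᵐᵒᵖ (X →ₗ[k] k)

noncomputable instance dualModR (Y : ModuleCat.{u} Bᵐᵒᵖ) : Module B (Y →ₗ[k] k) where
  smul b φ := φ ∘ₗ (DistribMulAction.toLinearMap k Y (op b))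
  one_smul φ := by
    ext x
    show φ ((op (1:B)) • x) = φ x
    rw [op_one, one_smul]
  mul_smul b c φ := by
    ext x
    show φ ((op (b * c)) • x) = φ ((op c) • (op b) • x)
    rw [op_mul, mul_smul]
  smul_zero b := rfl
  smul_add b φ ψ := rfl
  add_smul b c φ := by
    ext x
    show φ ((op (b + c)) • x) = φ ((op b) • x) + φ ((op c) • x)
    rw [op_add, add_smul, map_add]
  zero_smul φ := by
    ext x
    show φ ((op (0 : B)) • x) = 0
    rw [op_zero, zero_smul, map_zero]

/-- The standard duality `D = Hom_k(−, k)`, sending a right `B`-module to a left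
`B`-module. -/
def Dunop (Y : ModuleCat.{u} Bᵐᵒᵖ) : ModuleCat.{u} B :=
  ModuleCat.of B (Y →ₗ[k] k)

/-- `D(B_B)`, the standard injective cogenerator of `B`-Mod. -/
def Dcogen : ModuleCat.{u} B := Dunop k B (ModuleCat.of Bᵐᵒᵖ B)

/-- `T ≅ τ X = D Tr X`, the Auslander–Reiten translate. -/
def IsTauOf (X T : ModuleCat.{u} B) : Prop :=
  ∃ Tr : ModuleCat.{u} Bᵐᵒᵖ, IsTransposeOf B X Tr ∧ Nonempty (T ≃ₗ[B] Dunop k B Tr)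

/-- `T ≅ τ_n X = τ Ω^{n-1} X`. -/
def IsTauN (n : ℕ) (X T : ModuleCat.{u} B) : Prop :=
  ∃ Z, IsOmegaOf B (n-1) X Z ∧ IsTauOf k B Z T

/-- `T ≅ τ⁻ X = Tr D X`, the inverse Auslander–Reiten translate. -/
def IsTauInvOf (X T : ModuleCat.{u} B) : Prop :=
  ∃ Tr2 : ModuleCat.{u} Bᵐᵒᵖᵐᵒᵖ, IsTransposeOf Bᵐᵒᵖ (Dop k B X) Tr2 ∧
    Nonempty (T ≃ₗ[B] ((ModuleCat.restrictScalars (opOpHom B)).obj Tr2))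

/-- `T ≅ τ⁻_n X = τ⁻ Ω^{-(n-1)} X`. -/
def IsTauInvN (n : ℕ) (X T : ModuleCat.{u} B) : Prop :=
  ∃ Z, IsOmegaInvOf B (n-1) X Z ∧ IsTauInvOf k B Z T

/-- The Nakayama functor `ν = D Hom_B(−, B)` (on objects). -/
def nu (X : ModuleCat.{u} B) : ModuleCat.{u} B :=
  Dunop k B (ModuleCat.of Bᵐᵒᵖ (X →ₗ[B] B))

/-- The inverse Nakayama functor `ν⁻ = Hom_B(D(−), B)` (on objects). -/
def nuInv (X : ModuleCat.{u} B) : ModuleCat.{u} B :=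
  (ModuleCat.restrictScalars (opOpHom B)).obj
    (ModuleCat.of Bᵐᵒᵖᵐᵒᵖ ((Dop k B X) →ₗ[Bᵐᵒᵖ] Bᵐᵒᵖ))

/-- Relative `add Q`-dimension of `X` is at most `m`. -/
def RelAddDimLE (Q X : ModuleCat.{u} B) (m : ℕ) : Prop :=
  ResLE B Q (InAdd B Q) X m

/-- Relative `add Q`-codimension of `X` is at most `m`. -/
def RelAddCodimLE (Q X : ModuleCat.{u} B) (m : ℕ) : Prop :=
  CoresLE B Q (InAdd B Q) X m

/-- `Q` is an `l`-quasi-generator (without minimality of `l`). -/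
def QuasiGenLE (Q : ModuleCat.{u} B) (l : ℕ) : Prop :=
  CoresLE B Q (InAdd B Q) (ModuleCat.of B B) l

/-- `Q` is an `l`-quasi-generator: `l` is minimal. -/
def IsQuasiGen (Q : ModuleCat.{u} B) (l : ℕ) : Prop :=
  QuasiGenLE B Q l ∧ ∀ j, QuasiGenLE B Q j → l ≤ j

/-- `Q` is an `m`-quasi-cogenerator (without minimality of `m`). -/
def QuasiCogenLE (Q : ModuleCat.{u} B) (m : ℕ) : Prop :=
  ResLE B Q (InAdd B Q) (Dcogen k B) m

/-- `Q` is an `m`-quasi-cogenerator: `m` is minimal. -/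
def IsQuasiCogen (Q : ModuleCat.{u} B) (m : ℕ) : Prop :=
  QuasiCogenLE k B Q m ∧ ∀ j, QuasiCogenLE k B Q j → m ≤ j

/-- `(B, Q)` is a relative `n`-Auslander–Gorenstein pair. -/
def IsRelAGPair (Q : ModuleCat.{u} B) (n : ℕ) : Prop :=
  idLE B (ModuleCat.of B B) n ∧ idLE Bᵐᵒᵖ (ModuleCat.of Bᵐᵒᵖ Bᵐᵒᵖ) n ∧
  SelfOrth B Q ∧ domdimGE B Q (ModuleCat.of B B) n

/-- `Q` is an `(n, m, l)`-quasi-precluster tilting module. -/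
def IsQPCT (Q : ModuleCat.{u} B) (n m l : ℕ) : Prop :=
  (∀ i, 1 ≤ i → i ≤ n - 2 → ExtVanish B Q Q i) ∧
  IsQuasiGen B Q l ∧
  IsQuasiCogen k B Q m ∧
  (∃ T, IsTauN k B (n - m - 1) Q T ∧ RelAddDimLE B Q T m) ∧
  (∃ T, IsTauInvN k B (n - l - 1) Q T ∧ RelAddCodimLE B Q T l)

/-- Precomposition with `g`, as a `k`-linear map between Hom spaces. -/
def pcompk {X Y Z : ModuleCat.{u} B} (g : X →ₗ[B] Y) :
    (Y →ₗ[B] Z) →ₗ[k] (X →ₗ[B] Z) where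
  toFun h := h ∘ₗ g
  map_add' _ _ := rfl
  map_smul' _ _ := rfl


/-- `I` is an injective object for the exact structure `F_Mo`: it lies in
`add(DB ⊕ τ Mo)`. -/
def IsFInj (Mo I : ModuleCat.{u} B) : Prop :=
  ∃ T, IsTauOf k B Mo T ∧ InAdd B (ModuleCat.of B ((Dcogen k B) × T)) I

/-- `T` is an `F_Mo`-cotilting object: finite relative injective dimension, no relative
self-extensions, and the relative injectives `DB ⊕ τ Mo` admit a finite `F_Mo`-exact
resolution by objects of `add T`. -/
def FCotilting (Mo T : ModuleCat.{u} B) : Prop :=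
  (∃ r, CoresLE B Mo (IsFInj k B Mo) T r) ∧
  (∀ i, 1 ≤ i → FExtVanish B Mo T T i) ∧
  (∃ τM, IsTauOf k B Mo τM ∧
    ∃ r, ResLE B Mo (InAdd B T) (ModuleCat.of B ((Dcogen k B) × τM)) r)

end Duality

section EndStuff
variable (A : Type u) [Ring A] (Q : ModuleCat.{u} A)

/-- The canonical ring homomorphism `A → End_{End_A(Q)}(Q)`. -/
def toEndE : A →+* Module.End (Module.End A Q) Q where
  toFun a :=
    { toFun := fun q => a • q
      map_add' := fun x y => smul_add a x y
      map_smul' := fun e q => (e.map_smul a q).symm }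
  map_one' := by ext q; exact one_smul A q
  map_mul' x y := by ext q; exact mul_smul x y q
  map_zero' := by ext q; exact zero_smul A q
  map_add' x y := by ext q; exact add_smul x y q

/-- `Hom_A(Q, X)` as a left module over `End_A(Q)ᵐᵒᵖ` (i.e. a left `Λ`-module) by
precomposition. -/
noncomputable instance homPrecompMod (X : ModuleCat.{u} A) :
    Module (Module.End A Q)ᵐᵒᵖ (Q →ₗ[A] X) where
  smul e f := f ∘ₗ e.unop
  one_smul f := by ext q; rfl
  mul_smul e e' f := by ext q; rfl
  smul_zero e := rfl
  smul_add e f g := rfl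
  add_smul e e' f := by ext q; exact map_add f _ _
  zero_smul f := by ext q; exact map_zero f

/-- The actions of `A` and of `End_A(Q)` on `Q` commute. -/
instance endSMulComm : SMulCommClass (Module.End A Q) A Q :=
  ⟨fun e a q => e.map_smul a q⟩

instance endSMulComm' : SMulCommClass A (Module.End A Q) Q :=
  ⟨fun a e q => (e.map_smul a q).symm⟩

end EndStuff

end Paper
end

noncomputable section Statement3
open Paper

/-- The evaluation map `M → Hom_Λ(Hom_A(M, Q), Q)`, where `Λ = End_A(Q)^op`, so that
`Hom_A(M, Q)` is a right `Λ`-module, i.e. a left `End_A(Q)`-module. -/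
noncomputable def evalMap (A : Type) [Ring A] (Q M : ModuleCat.{0} A) :
    M →ₗ[A] ((M →ₗ[A] Q) →ₗ[Module.End A Q] Q) where
  toFun m :=
    { toFun := fun f => f m
      map_add' := fun f g => rfl
      map_smul' := fun e f => rfl }
  map_add' x y := by ext f; exact map_add f x y
  map_smul' a x := by ext f; exact map_smul f a x

/-! Write `X* = Hom_A(X, Q)` as a left `End_A(Q)`-module; `M` is reflexive when
`M → M**` is bijective, and modules in `add Q` are reflexive. Given `0 → M → Q₀ → Q₁` exact
with `Q₀*` → `M*` onto, an element of `M**` is an element of `Q₀**`, i.e. of `Q₀`, killed by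
`Q₁*`, hence by exactness an element of `M`. Conversely, if `M` is reflexive, map it to `Qⁿ`
by a finite set of `End_A(Q)`-generators of `M*` (they exist since everything is
finite-dimensional over `k`) and `Qⁿ` to `Qʳ` through generators of the dual of the cokernel;
then `Hom(−, Q)` is exact on `M → Qⁿ → Qʳ`, and reflexivity of `M` is exactly what makes the
sequence itself exact at `Qⁿ`. -/

namespace Paper

section EvalDual

variable (A : Type*) [Ring A] (Q : Type*) [AddCommGroup Q] [Module A Q]

def evalDual (X : Type*) [AddCommGroup X] [Module A X] :
    X →+ ((X →ₗ[A] Q) →ₗ[Module.End A Q] Q) where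
  toFun x := { toFun := fun f => f x, map_add' := fun _ _ => rfl, map_smul' := fun _ _ => rfl }
  map_zero' := by ext; simp
  map_add' _ _ := by ext; simp

variable {A Q} {X W V : Type*} [AddCommGroup X] [Module A X] [AddCommGroup W] [Module A W]
  [AddCommGroup V] [Module A V]

@[simp]
theorem evalDual_apply (x : X) (f : X →ₗ[A] Q) : evalDual A Q X x f = f x := rfl

theorem evalDual_injective_iff :
    Function.Injective (evalDual A Q X) ↔ ∀ x : X, (∀ f : X →ₗ[A] Q, f x = 0) → x = 0 := by
  simp only [injective_iff_map_eq_zero, LinearMap.ext_iff, evalDual_apply, LinearMap.zero_apply]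

theorem evalDual_surjective_iff :
    Function.Surjective (evalDual A Q X) ↔
      ∀ φ : (X →ₗ[A] Q) →ₗ[Module.End A Q] Q, ∃ x : X, ∀ f : X →ₗ[A] Q, f x = φ f := by
  simp only [Function.Surjective, LinearMap.ext_iff, evalDual_apply]

theorem evalDual_bijective_pi (ι : Type*) [Fintype ι] :
    Function.Bijective (evalDual A Q (ι → Q)) := by
  classical
  refine ⟨evalDual_injective_iff.2 fun x hx => funext fun i => hx (LinearMap.proj i),
    evalDual_surjective_iff.2 fun φ => ⟨fun i => φ (LinearMap.proj i), fun f => ?_⟩⟩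
  obtain ⟨c, rfl⟩ : ∃ c : ι → Module.End A Q, f = ∑ i, c i • LinearMap.proj i := by
    refine ⟨fun i => f ∘ₗ LinearMap.single A (fun _ => Q) i, ?_⟩
    ext i q
    simp [Pi.single_apply]
  simp [map_sum]

theorem evalDual_bijective_of_retract (s : X →ₗ[A] W) (r : W →ₗ[A] X)
    (hrs : r ∘ₗ s = LinearMap.id) (hW : Function.Bijective (evalDual A Q W)) :
    Function.Bijective (evalDual A Q X) := by
  refine ⟨evalDual_injective_iff.2 fun x hx => ?_, evalDual_surjective_iff.2 fun φ => ?_⟩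
  · have hsx : s x = 0 := evalDual_injective_iff.1 hW.1 (s x) fun h => hx (h ∘ₗ s)
    simpa [hsx] using (LinearMap.congr_fun hrs x).symm
  · obtain ⟨y, hy⟩ := evalDual_surjective_iff.1 hW.2 (φ ∘ₗ LinearMap.lcomp _ Q s)
    refine ⟨r y, fun f => ?_⟩
    rw [← LinearMap.comp_apply, hy, LinearMap.comp_apply, LinearMap.lcomp_apply',
      LinearMap.comp_assoc, hrs, LinearMap.comp_id]

theorem InAdd.evalDual_bijective {B : Type u} [Ring B] {Q X : ModuleCat.{u} B}
    (hX : InAdd B Q X) : Function.Bijective (evalDual B Q X) :=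
  let ⟨n, s, r, hrs⟩ := hX
  evalDual_bijective_of_retract s r hrs (evalDual_bijective_pi (Fin n))

theorem evalDual_injective_of_injective (ι : X →ₗ[A] W) (hι : Function.Injective ι)
    (hW : Function.Injective (evalDual A Q W)) : Function.Injective (evalDual A Q X) :=
  evalDual_injective_iff.2 fun x hx => (injective_iff_map_eq_zero ι).1 hι x <|
    evalDual_injective_iff.1 hW (ι x) fun h => hx (h ∘ₗ ι)

theorem evalDual_surjective_of_exact (ι : X →ₗ[A] W) (d : W →ₗ[A] V) (hex : Function.Exact ι d)
    (hext : Function.Surjective fun h : W →ₗ[A] Q => h ∘ₗ ι)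
    (hW : Function.Surjective (evalDual A Q W)) (hV : Function.Injective (evalDual A Q V)) :
    Function.Surjective (evalDual A Q X) := by
  refine evalDual_surjective_iff.2 fun φ => ?_
  obtain ⟨w, hw⟩ := evalDual_surjective_iff.1 hW (φ ∘ₗ LinearMap.lcomp _ Q ι)
  have hdw : d w = 0 := evalDual_injective_iff.1 hV _ fun h => by
    rw [← LinearMap.comp_apply, hw, LinearMap.comp_apply, LinearMap.lcomp_apply',
      LinearMap.comp_assoc, hex.linearMap_comp_eq_zero, LinearMap.comp_zero, map_zero]
  obtain ⟨x, rfl⟩ := (hex w).1 hdw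
  refine ⟨x, fun f => ?_⟩
  obtain ⟨h, rfl⟩ := hext f
  exact hw h

theorem injective_of_surjective_precomp (ι : X →ₗ[A] W) (hX : Function.Injective (evalDual A Q X))
    (hext : Function.Surjective fun h : W →ₗ[A] Q => h ∘ₗ ι) : Function.Injective ι := by
  refine (injective_iff_map_eq_zero ι).2 fun x hx => evalDual_injective_iff.1 hX x fun f => ?_
  obtain ⟨h, rfl⟩ := hext f
  simp [hx]

theorem exact_of_surjective_precomp (ι : X →ₗ[A] W) (d : W →ₗ[A] V)
    (hX : Function.Surjective (evalDual A Q X)) (hW : Function.Injective (evalDual A Q W))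
    (hext : Function.Surjective fun h : W →ₗ[A] Q => h ∘ₗ ι) (hdι : d ∘ₗ ι = 0)
    (hdext : ∀ F : W →ₗ[A] Q, F ∘ₗ ι = 0 → ∃ G : V →ₗ[A] Q, G ∘ₗ d = F) :
    Function.Exact ι d := by
  refine fun w => ⟨fun hw => ?_, by rintro ⟨x, rfl⟩; exact LinearMap.congr_fun hdι x⟩
  -- Evaluation at `w` descends along `h ↦ h ∘ₗ ι`, since maps killed by `ι` factor through `d`.
  set π := LinearMap.lcomp (Module.End A Q) Q ι
  have hker : LinearMap.ker π ≤ LinearMap.ker (evalDual A Q W w) := fun h hh => by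
    obtain ⟨G, rfl⟩ := hdext h hh
    simp [hw]
  let φ := (LinearMap.ker π).liftQ _ hker ∘ₗ (π.quotKerEquivOfSurjective hext).symm.toLinearMap
  have hφ : ∀ h : W →ₗ[A] Q, φ (h ∘ₗ ι) = h w := fun h => by
    have hmk : (π.quotKerEquivOfSurjective hext).symm (π h) = Submodule.Quotient.mk h :=
      (LinearEquiv.symm_apply_eq _).2 rfl
    simp only [φ, LinearMap.comp_apply, LinearEquiv.coe_coe]
    rw [show h ∘ₗ ι = π h from rfl, hmk]
    rfl
  obtain ⟨x, hx⟩ := evalDual_surjective_iff.1 hX φ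
  exact ⟨x, hW (LinearMap.ext fun h => (hx (h ∘ₗ ι)).trans (hφ h))⟩

theorem surjective_precomp_pi_of_span_eq_top {ι : Type*} [Fintype ι] (f : ι → X →ₗ[A] Q)
    (hf : Submodule.span (Module.End A Q) (Set.range f) = ⊤) :
    Function.Surjective fun h : (ι → Q) →ₗ[A] Q => h ∘ₗ LinearMap.pi f := by
  intro g
  obtain ⟨c, rfl⟩ := (Submodule.mem_span_range_iff_exists_fun _).1 (hf ▸ Submodule.mem_top : g ∈ _)
  exact ⟨∑ i, c i ∘ₗ LinearMap.proj i, by ext; simp⟩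

theorem exists_comp_mkQ_eq_of_comp_eq_zero (ι : X →ₗ[A] W) (c : (W ⧸ LinearMap.range ι) →ₗ[A] V)
    (hc : Function.Surjective fun h : V →ₗ[A] Q => h ∘ₗ c) (F : W →ₗ[A] Q) (hF : F ∘ₗ ι = 0) :
    ∃ G : V →ₗ[A] Q, G ∘ₗ (c ∘ₗ (LinearMap.range ι).mkQ) = F := by
  obtain ⟨G, hG : G ∘ₗ c = _⟩ := hc ((LinearMap.range ι).liftQ F (LinearMap.range_le_ker_iff.2 hF))
  exact ⟨G, by rw [← LinearMap.comp_assoc, hG]; exact Submodule.liftQ_mkQ _ _ _⟩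

theorem finite_end_linearMap (k : Type*) [Field k] [Algebra k A] [Module k X]
    [IsScalarTower k A X] [Module k Q] [IsScalarTower k A Q] [FiniteDimensional k X]
    [FiniteDimensional k Q] : Module.Finite (Module.End A Q) (X →ₗ[A] Q) :=
  have : IsScalarTower k (Module.End A Q) (X →ₗ[A] Q) := ⟨fun c e f => by ext; simp⟩
  Module.Finite.of_restrictScalars_finite k _ _

theorem finite_end_linearMap_of_finiteDimensional (k : Type*) [Field k] [Algebra k A]
    [FiniteDimensional k A] [Module.Finite A X] [Module.Finite A Q] :
    Module.Finite (Module.End A Q) (X →ₗ[A] Q) := by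
  let _ := Module.compHom X (algebraMap k A)
  let _ := Module.compHom Q (algebraMap k A)
  have : IsScalarTower k A X := ⟨fun c a x => by rw [Algebra.smul_def]; exact mul_smul _ a x⟩
  have : IsScalarTower k A Q := ⟨fun c a x => by rw [Algebra.smul_def]; exact mul_smul _ a x⟩
  have : Module.Finite k X := .trans A X
  have : Module.Finite k Q := .trans A Q
  exact finite_end_linearMap k

end EvalDual

theorem coe_evalMap (A : Type) [Ring A] (Q M : ModuleCat.{0} A) :
    ⇑(evalMap A Q M) = evalDual A Q M :=
  rfl

theorem domdimGE_two_iff {B : Type u} [Ring B] (Q X : ModuleCat.{u} B) :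
    domdimGE B Q X 2 ↔ ∃ (W₀ W₁ : ModuleCat.{u} B) (ι : X →ₗ[B] W₀) (d : W₀ →ₗ[B] W₁),
      InAdd B Q W₀ ∧ InAdd B Q W₁ ∧ Function.Injective ι ∧ Function.Exact ι d ∧
      (Function.Surjective fun h : W₀ →ₗ[B] Q => h ∘ₗ ι) ∧
      ∀ F : W₀ →ₗ[B] Q, F ∘ₗ ι = 0 → ∃ G : W₁ →ₗ[B] Q, G ∘ₗ d = F := by
  constructor
  · rintro (h | ⟨W, ι, d, hW, hι, hex, -, hext, hext₁, -⟩)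
    · cases h
    · exact ⟨W 0, W 1, ι, d 0, hW 0 le_add_self, hW 1 le_rfl, hι, hex le_rfl, hext, hext₁ le_rfl⟩
  · rintro ⟨W₀, W₁, ι, d, hW₀, hW₁, hι, hex, hext, hext₁⟩
    refine Or.inr ⟨fun | 0 => W₀ | _ + 1 => W₁, ι, fun | 0 => d | _ + 1 => 0,
      fun | 0, _ => hW₀ | 1, _ => hW₁, hι, fun _ => hex, fun _ h => by omega, hext,
      fun _ => hext₁, fun _ h => by omega⟩

end Paper

open Paper in
/-- relative Mueller theorem, Theorem 2.2 (α): the evaluation map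
`M → Hom_Λ(Hom_A(M, Q), Q)` is an isomorphism if and only if `Q`-domdim of `M` is
at least `2`. -/
theorem stmt3 (k : Type) [Field k] (A : Type) [Ring A] [Algebra k A] [FiniteDimensional k A]
    (Q M : ModuleCat.{0} A) [Module.Finite A Q] [Module.Finite A M] :
    Function.Bijective (evalMap A Q M) ↔ domdimGE A Q M 2 := by
  rw [coe_evalMap, domdimGE_two_iff]
  constructor
  · intro hM
    have := finite_end_linearMap_of_finiteDimensional (A := A) (Q := Q) (X := M) k
    obtain ⟨n, f, hf⟩ := Module.Finite.exists_fin (R := Module.End A Q) (M := M →ₗ[A] Q)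
    set ι := LinearMap.pi f
    let C := (Fin n → Q) ⧸ LinearMap.range ι
    have := finite_end_linearMap_of_finiteDimensional (A := A) (Q := Q) (X := C) k
    obtain ⟨r, g, hg⟩ := Module.Finite.exists_fin (R := Module.End A Q) (M := C →ₗ[A] Q)
    have hext := surjective_precomp_pi_of_span_eq_top f hf
    have hdext := exists_comp_mkQ_eq_of_comp_eq_zero ι _ (surjective_precomp_pi_of_span_eq_top g hg)
    have hdι : (LinearMap.pi g ∘ₗ (LinearMap.range ι).mkQ) ∘ₗ ι = 0 := by
      rw [LinearMap.comp_assoc, LinearMap.range_mkQ_comp, LinearMap.comp_zero]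
    exact ⟨.of A (Fin n → Q), .of A (Fin r → Q), ι, _, ⟨n, .id, .id, rfl⟩, ⟨r, .id, .id, rfl⟩,
      injective_of_surjective_precomp ι hM.1 hext,
      exact_of_surjective_precomp ι _ hM.2 (evalDual_bijective_pi (Fin n)).1 hext hdι hdext,
      hext, hdext⟩
  · rintro ⟨W₀, W₁, ι, d, hW₀, hW₁, hι, hex, hext, -⟩
    exact ⟨evalDual_injective_of_injective ι hι hW₀.evalDual_bijective.1,
      evalDual_surjective_of_exact ι d hex hext hW₀.evalDual_bijective.2 hW₁.evalDual_bijective.1⟩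

end Statement3
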